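/- arXiv:2403.02116 — 3 statements merged into one kernel-verified Lean document; each statement's English description precedes it below -/
import Mathlib

section
/- Let (U, R) be jointly distributed random variables where U takes values in {0,1} and R takes values in a countable space Z, and suppose the conditional Shannon entropy H(U | R) (in bits) is strictly positive. Then for every function A : Z → {0,1}, the probability of correct inference is bounded as Pr(A(R) = U) ≤ 1 − H(U | R) / (2 · log₂(6 / H(U | R))). -/
/-!
Fano's inequality bounds `H(U | R) log 2` by the binary entropy `h(Pₑ)` of the error probability
`Pₑ` of the attack; fiberwise it is Gibbs' inequality against the distribution `(1 - Pₑ, Pₑ)`.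
The elementary bound `h(p) ≤ p log (6 / p)` turns this into `H log 2 ≤ Pₑ log (6 / Pₑ)`, and
since `x ↦ x log (6 / x)` increases on `(0, 1]`, this forces `Pₑ ≥ H / (2 log₂ (6 / H))`.
-/

open MeasureTheory Real

/-- Conditional Shannon entropy `H(U | R)` (in bits) of a `Bool`-valued random
variable `U` given a random variable `R` with values in a countable space `Z`,
defined as `- ∑_{z,u} Pr(U = u, R = z) · log₂( Pr(U = u, R = z) / Pr(R = z) )`
(terms with zero probability contribute `0`). -/
noncomputable def condEnt2 {Ω Z : Type*} [MeasurableSpace Ω]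
    (μ : Measure Ω) (U : Ω → Bool) (R : Ω → Z) : ℝ :=
  - ∑' (z : Z), ∑' (u : Bool),
      (μ {ω | U ω = u ∧ R ω = z}).toReal *
        Real.logb 2 ((μ {ω | U ω = u ∧ R ω = z}).toReal / (μ {ω | R ω = z}).toReal)

lemma mul_log_sub_mul_log_div_le {a q α : ℝ} (ha : 0 ≤ a) (haq : a ≤ q) (hα : 0 ≤ α)
    (hα₀ : α = 0 → a = 0) : a * log α - a * log (a / q) ≤ α * q - a := by
  rcases ha.eq_or_lt with rfl | ha
  · simpa using mul_nonneg hα haq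
  have hα : 0 < α := hα.lt_of_ne fun h => ha.ne' (hα₀ h.symm)
  have hq : 0 < q := ha.trans_le haq
  calc a * log α - a * log (a / q) = a * log (α * q / a) := by
        rw [log_div (by positivity) ha.ne', log_div ha.ne' hq.ne', log_mul hα.ne' hq.ne']; ring
    _ ≤ a * (α * q / a - 1) :=
        mul_le_mul_of_nonneg_left (log_le_sub_one_of_pos (by positivity)) ha.le
    _ = α * q - a := by field_simp

lemma two_point_entropy_nonneg {a b : ℝ} (ha : 0 ≤ a) (hb : 0 ≤ b) :
    0 ≤ -(a * log (a / (a + b)) + b * log (b / (a + b))) := by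
  have term_nonpos {x : ℝ} (hx : 0 ≤ x) (hxy : x ≤ a + b) : x * log (x / (a + b)) ≤ 0 :=
    mul_nonpos_of_nonneg_of_nonpos hx
      (log_nonpos (div_nonneg hx (by linarith)) (div_le_one_of_le₀ hxy (by linarith)))
  linarith [term_nonpos ha (by linarith), term_nonpos hb (by linarith)]

lemma two_point_entropy_le_crossEntropy {a b α β : ℝ} (ha : 0 ≤ a) (hb : 0 ≤ b)
    (hα : 0 ≤ α) (hβ : 0 ≤ β) (hαβ : α + β = 1) (hα₀ : α = 0 → a = 0) (hβ₀ : β = 0 → b = 0) :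
    -(a * log (a / (a + b)) + b * log (b / (a + b))) ≤ -(a * log α + b * log β) := by
  have := mul_log_sub_mul_log_div_le ha (le_add_of_nonneg_right hb) hα hα₀
  have := mul_log_sub_mul_log_div_le hb (le_add_of_nonneg_left ha) hβ hβ₀
  nlinarith

lemma binEntropy_le_mul_log_six_div {p : ℝ} (hp₀ : 0 ≤ p) (hp₁ : p ≤ 1) :
    binEntropy p ≤ p * log (6 / p) := by
  rcases hp₀.eq_or_lt with rfl | hp₀
  · simp
  have hlog6 : 1 ≤ log 6 := by
    rw [le_log_iff_exp_le (by norm_num)]; linarith [exp_one_lt_d9]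
  have hrest : negMulLog (1 - p) ≤ p := by
    simpa using negMulLog_le_one_sub_self (sub_nonneg.2 hp₁)
  rw [binEntropy_eq_negMulLog_add_negMulLog_one_sub, negMulLog, log_div (by norm_num) hp₀.ne']
  nlinarith

lemma monotoneOn_mul_log_div (c : ℝ) :
    MonotoneOn (fun x => x * log (c / x)) (Set.Ioc 0 (c / exp 1)) := by
  rintro a ⟨ha, -⟩ b ⟨hb, hbc⟩ hab
  have hc : 0 < c := (div_pos_iff_of_pos_right (exp_pos 1)).1 (hb.trans_le hbc)
  have hlog_cb : 1 ≤ log (c / b) := by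
    rw [le_log_iff_exp_le (by positivity), le_div_iff₀ hb, mul_comm]
    exact (le_div_iff₀ (exp_pos 1)).1 hbc
  have hlog_ba : a * log (b / a) ≤ b - a := by
    have := mul_le_mul_of_nonneg_left (log_le_sub_one_of_pos (div_pos hb ha)) ha.le
    rwa [mul_sub, mul_div_cancel₀ _ ha.ne', mul_one] at this
  have hsplit : log (c / a) = log (c / b) + log (b / a) := by
    rw [← log_mul (by positivity) (by positivity), div_mul_div_cancel₀ hb.ne']
  simp only [hsplit]
  nlinarith

lemma div_two_mul_logb_le_of_mul_log_two_le {H E : ℝ} (hH : 0 < H) (hH₁ : H ≤ 1) (hE : 0 ≤ E)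
    (h : H * log 2 ≤ E * log (6 / E)) : H / (2 * logb 2 (6 / H)) ≤ E := by
  set L := log (6 / H)
  have hlog2 : 0 < log 2 := log_pos (by norm_num)
  have hL6 : log 6 ≤ L := log_le_log (by norm_num) (by rw [le_div_iff₀ hH]; linarith)
  have hL : 0 < L := (log_pos (by norm_num)).trans_le hL6
  have hlog26 : log 2 ≤ log 6 := log_le_log (by norm_num) (by norm_num)
  set p := H * log 2 / (2 * L)
  have hp_eq : H / (2 * logb 2 (6 / H)) = p := by simp only [logb, p, L]; field_simp
  have hp : 0 < p := by positivity
  have hp₁ : p ≤ 1 := (div_le_one (by positivity)).2 (by nlinarith)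
  have he : 1 ≤ 6 / exp 1 := by rw [le_div_iff₀ (exp_pos 1)]; linarith [exp_one_lt_d9]
  have hmono := monotoneOn_mul_log_div 6
  have hHL : H * L < 3 * log 2 := by
    have h68 : log 6 < 3 * log 2 := by
      rw [← log_rpow (by norm_num)]; exact log_lt_log (by norm_num) (by norm_num)
    calc H * L ≤ 1 * log (6 / 1) := hmono ⟨hH, hH₁.trans he⟩ ⟨one_pos, he⟩ hH₁
      _ < 3 * log 2 := by simpa using h68
  -- the value at `p` undershoots because `H log (6 / H) < log 8`
  have hp_val : p * log (6 / p) < H * log 2 := by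
    have hpL : H * log 2 = p * (2 * L) := by simp only [p]; field_simp
    rw [hpL, show 2 * L = log ((6 / H) ^ 2) by rw [log_pow]; norm_num; rfl]
    refine mul_lt_mul_of_pos_left (log_lt_log (by positivity) ?_) hp
    rw [div_lt_iff₀ hp,
      show (6 / H) ^ 2 * p = 18 * log 2 / (H * L) by simp only [p]; field_simp; ring,
      lt_div_iff₀ (by positivity)]
    linarith
  rw [hp_eq]
  by_contra! hlt
  rcases hE.eq_or_lt with rfl | hE
  · simp only [zero_mul] at h; nlinarith
  linarith [hmono ⟨hE, (hlt.trans_le hp₁).le.trans he⟩ ⟨hp, hp₁.trans he⟩ hlt.le]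

lemma tsum_bool_eq_add_not {M : Type*} [AddCommMonoid M] [TopologicalSpace M] [T2Space M]
    (f : Bool → M) (b : Bool) : ∑' u, f u = f b + f !b := by
  cases b <;> simp [add_comm]

section

variable {Ω Z : Type*} [MeasurableSpace Ω] [MeasurableSpace Z] [MeasurableSingletonClass Z]
  {μ : Measure Ω} {U : Ω → Bool} {R : Ω → Z}

lemma measurableSet_eq_and_eq (hU : Measurable U) (hR : Measurable R) (u : Bool) (z : Z) :
    MeasurableSet {ω | U ω = u ∧ R ω = z} :=
  (hU (measurableSet_singleton u)).inter (hR (measurableSet_singleton z))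

lemma measure_fiber_eq_add (hU : Measurable U) (hR : Measurable R) (z : Z) (b : Bool) :
    μ {ω | R ω = z} = μ {ω | U ω = b ∧ R ω = z} + μ {ω | U ω = !b ∧ R ω = z} := by
  rw [← measure_union _ (measurableSet_eq_and_eq hU hR _ z)]
  · congr 1; ext ω; cases h : U ω <;> cases b <;> simp [h]
  · exact Set.disjoint_left.2 fun ω h1 h2 => by simp_all

lemma hasSum_toReal_measure_eq_and_eq [Countable Z] [IsFiniteMeasure μ]
    (hU : Measurable U) (hR : Measurable R) (g : Z → Bool) :
    HasSum (fun z => (μ {ω | U ω = g z ∧ R ω = z}).toReal) (μ {ω | U ω = g (R ω)}).toReal := by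
  have hunion : ⋃ z, {ω | U ω = g z ∧ R ω = z} = {ω | U ω = g (R ω)} := by
    ext ω; simp
  have htsum : ∑' z, μ {ω | U ω = g z ∧ R ω = z} = μ {ω | U ω = g (R ω)} := by
    rw [← hunion, measure_iUnion _ (fun z => measurableSet_eq_and_eq hU hR _ z)]
    exact fun z z' h => Set.disjoint_left.2 fun ω h1 h2 => h (h1.2.symm.trans h2.2)
  rw [← htsum, ENNReal.tsum_toReal_eq (fun _ => measure_ne_top _ _)]
  exact ENNReal.hasSum_toReal (htsum ▸ measure_ne_top _ _)

lemma toReal_measure_eq_eq_one_sub [Countable Z] [IsProbabilityMeasure μ]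
    (hU : Measurable U) (hR : Measurable R) (A : Z → Bool) :
    (μ {ω | A (R ω) = U ω}).toReal = 1 - (μ {ω | A (R ω) ≠ U ω}).toReal := by
  have hmeas : MeasurableSet {ω | A (R ω) = U ω} :=
    measurableSet_eq_fun ((Measurable.of_discrete).comp hR) hU
  have hcompl := probReal_compl_eq_one_sub (μ := μ) hmeas
  rw [measureReal_def, measureReal_def] at hcompl
  change _ = 1 - (μ {ω | A (R ω) = U ω}ᶜ).toReal
  linarith

/-- Fano's inequality for a binary secret, in nats. -/
theorem condEnt2_mul_log_two_le_binEntropy [Countable Z] [IsProbabilityMeasure μ]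
    (hU : Measurable U) (hR : Measurable R) (A : Z → Bool) :
    condEnt2 μ U R * log 2 ≤ binEntropy (μ {ω | A (R ω) ≠ U ω}).toReal := by
  set e := (μ {ω | A (R ω) ≠ U ω}).toReal
  set a : Z → ℝ := fun z => (μ {ω | U ω = A z ∧ R ω = z}).toReal
  set b : Z → ℝ := fun z => (μ {ω | U ω = !A z ∧ R ω = z}).toReal
  have ha z : 0 ≤ a z := ENNReal.toReal_nonneg
  have hb z : 0 ≤ b z := ENNReal.toReal_nonneg
  have hright : HasSum a (1 - e) := by
    rw [← toReal_measure_eq_eq_one_sub hU hR A]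
    convert hasSum_toReal_measure_eq_and_eq (μ := μ) hU hR A using 3
    ext ω; exact eq_comm
  have hwrong : HasSum b e := by
    convert hasSum_toReal_measure_eq_and_eq (μ := μ) hU hR (fun z => !A z) using 3
    ext ω; exact (Bool.eq_not_iff.trans ne_comm).symm
  have hfiber z : (μ {ω | R ω = z}).toReal = a z + b z := by
    rw [measure_fiber_eq_add hU hR z (A z),
      ENNReal.toReal_add (measure_ne_top _ _) (measure_ne_top _ _)]
  have hcondEnt : condEnt2 μ U R * log 2
      = ∑' z, -(a z * log (a z / (a z + b z)) + b z * log (b z / (a z + b z))) := by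
    rw [condEnt2, neg_mul, ← tsum_mul_right, ← tsum_neg]
    congr 1; funext z
    rw [tsum_bool_eq_add_not _ (A z), hfiber z]
    simp only [logb, a, b]
    field_simp
  have hterm z : -(a z * log (a z / (a z + b z)) + b z * log (b z / (a z + b z)))
      ≤ -(a z * log (1 - e) + b z * log e) := by
    refine two_point_entropy_le_crossEntropy (ha z) (hb z) (hright.nonneg ha) (hwrong.nonneg hb)
      (by ring) (fun h => ?_) (fun h => ?_)
    · exact le_antisymm (h ▸ le_hasSum hright z fun z _ => ha z) (ha z)
    · exact le_antisymm (h ▸ le_hasSum hwrong z fun z _ => hb z) (hb z)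
  have hcross : HasSum (fun z => -(a z * log (1 - e) + b z * log e)) (binEntropy e) := by
    rw [show binEntropy e = -((1 - e) * log (1 - e) + e * log e) by
      rw [binEntropy, log_inv, log_inv]; ring]
    exact ((hright.mul_right (log (1 - e))).add (hwrong.mul_right (log e))).neg
  have hsummable :=
    hcross.summable.of_nonneg_of_le (fun z => two_point_entropy_nonneg (ha z) (hb z)) hterm
  rw [hcondEnt]
  exact hasSum_le hterm hsummable.hasSum hcross

end

/-- **Theorem 3.1 (guaranteed privacy leakage against membership inference attacks).**
If `(U, R)` are jointly distributed with `U ∈ {0,1}`, `R` valued in a countable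
space `Z`, and `H(U | R) > 0` (in bits), then any inference function
`A : Z → {0,1}` satisfies
`Pr(A(R) = U) ≤ 1 − H(U | R) / (2 · log₂(6 / H(U | R)))`. -/
theorem membership_inference_accuracy_bound
    {Ω Z : Type*} [MeasurableSpace Ω] [MeasurableSpace Z]
    [Countable Z] [MeasurableSingletonClass Z]
    (μ : Measure Ω) [IsProbabilityMeasure μ]
    (U : Ω → Bool) (R : Ω → Z)
    (hU : Measurable U) (hR : Measurable R)
    (hH : 0 < condEnt2 μ U R) :
    ∀ A : Z → Bool,
      (μ {ω | A (R ω) = U ω}).toReal ≤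
        1 - condEnt2 μ U R / (2 * Real.logb 2 (6 / condEnt2 μ U R)) := by
  intro A
  set e := (μ {ω | A (R ω) ≠ U ω}).toReal
  have he₀ : 0 ≤ e := ENNReal.toReal_nonneg
  have he₁ : e ≤ 1 := measureReal_le_one
  have hfano := condEnt2_mul_log_two_le_binEntropy (μ := μ) hU hR A
  have hH₁ : condEnt2 μ U R ≤ 1 :=
    (mul_le_iff_le_one_left (log_pos one_lt_two)).1 (hfano.trans binEntropy_le_log_two)
  have hbound := div_two_mul_logb_le_of_mul_log_two_le hH hH₁ he₀
    (hfano.trans (binEntropy_le_mul_log_six_div he₀ he₁))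
  rw [toReal_measure_eq_eq_one_sub hU hR A]
  linarith
end

section
/- Let (U, R) be jointly distributed random variables where U takes values in {0,1} and R takes values in a countable space Z, and suppose the conditional Shannon entropy H(U | R) (in bits) is strictly positive. Then for every function A : Z → {0,1}, the probability of correct inference is bounded as Pr(A(R) = U) ≤ 1 − H(U | R) / (2 · log₂(6 / H(U | R))). -/
/-!
Gibbs' inequality, applied to the conditional law of `U` given `R = z` against the two-point law
`(s, 1 - s)` placed on the less and the more likely value of `U`, gives after summation over `z`
`H(U | R) ln 2 ≤ -(P ln s + (1 - P) ln (1 - s))` for every `s ∈ (0, 1)`, where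
`P = ∑_z min (Pr(U = 0, R = z), Pr(U = 1, R = z))` is the Bayes error: no attack is correct with
probability more than `1 - P`. For `s = p := H / (2 log₂ (6 / H)) < 1/2` the right-hand side is
affine in `P` with positive slope and equals the binary entropy `h(p)` at `P = p`, while
`h(p) ≤ p (1 - ln p) ≤ H ln 2` by `ln x ≤ x - 1`; hence `P ≥ p`.
-/

open MeasureTheory Real

lemma sub_mul_le_mul_log_div_sub_mul_log {x q r : ℝ} (hx : 0 ≤ x) (hq : 0 < q) (hr : 0 < r) :
    x - q * r ≤ x * log (x / q) - x * log r := by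
  rcases hx.eq_or_lt with rfl | hx
  · simpa using (mul_pos hq hr).le
  have h := one_sub_inv_le_log_of_pos (show 0 < x / q / r by positivity)
  rw [log_div (by positivity) hr.ne'] at h
  calc x - q * r = x * (1 - (x / q / r)⁻¹) := by field_simp
    _ ≤ x * (log (x / q) - log r) := by gcongr
    _ = x * log (x / q) - x * log r := by ring

/-- Gibbs' inequality for two outcomes. -/
lemma neg_mul_log_add_le {a b s : ℝ} (ha : 0 ≤ a) (hb : 0 ≤ b) (hs₀ : 0 < s) (hs₁ : s < 1) :
    -(a * log (a / (a + b)) + b * log (b / (a + b))) ≤ -(a * log s + b * log (1 - s)) := by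
  rcases (add_nonneg ha hb).eq_or_lt with hq | hq
  · obtain ⟨rfl, rfl⟩ : a = 0 ∧ b = 0 := ⟨by linarith, by linarith⟩
    simp
  have h₁ := sub_mul_le_mul_log_div_sub_mul_log ha hq hs₀
  have h₂ := sub_mul_le_mul_log_div_sub_mul_log hb hq (sub_pos.2 hs₁)
  linarith

lemma neg_mul_log_add_le_min_max {a b s : ℝ} (ha : 0 ≤ a) (hb : 0 ≤ b) (hs₀ : 0 < s)
    (hs₁ : s < 1) :
    -(a * log (a / (a + b)) + b * log (b / (a + b))) ≤
      -(min a b * log s + max a b * log (1 - s)) := by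
  rcases le_total a b with hab | hab
  · rw [min_eq_left hab, max_eq_right hab]
    exact neg_mul_log_add_le ha hb hs₀ hs₁
  · rw [min_eq_right hab, max_eq_left hab]
    have := neg_mul_log_add_le hb ha hs₀ hs₁
    rw [add_comm b a] at this
    linarith

lemma binEntropy_le_mul_one_sub_log {p : ℝ} (hp : p ≤ 1) : binEntropy p ≤ p * (1 - log p) := by
  have := negMulLog_le_one_sub_self (sub_nonneg.2 hp)
  rw [binEntropy_eq_negMulLog_add_negMulLog_one_sub, negMulLog]
  linarith

lemma le_of_binEntropy_le_crossEntropy {p P : ℝ} (hp₀ : 0 < p) (hp : p < 1 / 2)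
    (h : binEntropy p ≤ -(P * log p + (1 - P) * log (1 - p))) : p ≤ P := by
  have hlog : log p < log (1 - p) := log_lt_log hp₀ (by linarith)
  rw [binEntropy_eq_negMulLog_add_negMulLog_one_sub, negMulLog, negMulLog] at h
  nlinarith

noncomputable def fanoGap (H : ℝ) : ℝ := H / (2 * logb 2 (6 / H))

lemma fanoGap_eq (H : ℝ) : fanoGap H = H * log 2 / (2 * log (6 / H)) := by
  rw [fanoGap, logb, ← mul_div_assoc, div_div_eq_mul_div]

lemma one_lt_logb_six_div {H : ℝ} (hH₀ : 0 < H) (hH₁ : H < 3) : 1 < logb 2 (6 / H) := by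
  rw [lt_logb_iff_rpow_lt one_lt_two (by positivity), rpow_one, lt_div_iff₀ hH₀]
  linarith

lemma fanoGap_pos {H : ℝ} (hH₀ : 0 < H) (hH₁ : H < 3) : 0 < fanoGap H :=
  div_pos hH₀ (by linarith [one_lt_logb_six_div hH₀ hH₁])

lemma fanoGap_lt_half {H : ℝ} (hH₀ : 0 < H) (hH₁ : H ≤ 1) : fanoGap H < 1 / 2 := by
  have := one_lt_logb_six_div hH₀ (by linarith)
  rw [fanoGap, div_lt_iff₀ (by linarith)]
  nlinarith

lemma one_sub_log_fanoGap_le {H : ℝ} (hH₀ : 0 < H) (hH₁ : H < 6) :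
    1 - log (fanoGap H) ≤ 2 * log (6 / H) := by
  have hℓ : 0 < log (6 / H) := log_pos ((one_lt_div hH₀).2 hH₁)
  have hlog_fanoGap : log (fanoGap H) = log H + log (log 2) - log 2 - log (log (6 / H)) := by
    rw [fanoGap_eq, log_div (by positivity) (by positivity), log_mul hH₀.ne' (by positivity),
      log_mul two_ne_zero hℓ.ne']
    ring
  have hℓ_eq : log (6 / H) = log 2 + log 3 - log H := by
    rw [log_div (by norm_num) hH₀.ne', show (6 : ℝ) = 2 * 3 by norm_num,
      log_mul two_ne_zero three_ne_zero]
  have hlogℓ : log (log (6 / H)) ≤ log (6 / H) - 1 := log_le_sub_one_of_pos hℓ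
  -- `3 ln 2 ≥ 1`, i.e. `e ≤ 8`
  have h3log2 : 0 ≤ log 3 + log (log 2) := by
    rw [← log_mul three_ne_zero (log_pos one_lt_two).ne']
    exact log_nonneg (by linarith [log_two_gt_d9])
  linarith

lemma binEntropy_fanoGap_le {H : ℝ} (hH₀ : 0 < H) (hH₁ : H ≤ 1) :
    binEntropy (fanoGap H) ≤ H * log 2 := by
  have hℓ : 0 < log (6 / H) := log_pos ((one_lt_div hH₀).2 (by linarith))
  calc binEntropy (fanoGap H) ≤ fanoGap H * (1 - log (fanoGap H)) :=
        binEntropy_le_mul_one_sub_log (by linarith [fanoGap_lt_half hH₀ hH₁])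
    _ ≤ fanoGap H * (2 * log (6 / H)) := by
        gcongr
        exacts [(fanoGap_pos hH₀ (by linarith)).le, one_sub_log_fanoGap_le hH₀ (by linarith)]
    _ = H * log 2 := by
        rw [fanoGap_eq]
        field_simp

section BayesError

variable {Z : Type*}

/-- The conditional entropy in nats of a binary variable given `z`, from the joint masses
`a z = Pr(U = false, R = z)` and `b z = Pr(U = true, R = z)`. -/
noncomputable def binCondEntropy (a b : Z → ℝ) : ℝ :=
  -∑' z, (a z * log (a z / (a z + b z)) + b z * log (b z / (a z + b z)))

noncomputable def bayesError (a b : Z → ℝ) : ℝ := ∑' z, min (a z) (b z)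

variable {a b : Z → ℝ}

lemma summable_min_of_hasSum_add (ha : ∀ z, 0 ≤ a z) (hb : ∀ z, 0 ≤ b z)
    (hab : HasSum (fun z => a z + b z) 1) : Summable fun z => min (a z) (b z) :=
  hab.summable.of_nonneg_of_le (fun z => le_min (ha z) (hb z))
    fun z => (min_le_left _ _).trans (le_add_of_nonneg_right (hb z))

lemma summable_max_of_hasSum_add (ha : ∀ z, 0 ≤ a z) (hb : ∀ z, 0 ≤ b z)
    (hab : HasSum (fun z => a z + b z) 1) : Summable fun z => max (a z) (b z) :=
  hab.summable.of_nonneg_of_le (fun z => (ha z).trans (le_max_left _ _))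
    fun z => max_le (le_add_of_nonneg_right (hb z)) (le_add_of_nonneg_left (ha z))

lemma tsum_max_eq_one_sub_bayesError (ha : ∀ z, 0 ≤ a z) (hb : ∀ z, 0 ≤ b z)
    (hab : HasSum (fun z => a z + b z) 1) : ∑' z, max (a z) (b z) = 1 - bayesError a b := by
  rw [bayesError, eq_sub_iff_add_eq, ← (summable_max_of_hasSum_add ha hb hab).tsum_add
    (summable_min_of_hasSum_add ha hb hab), ← hab.tsum_eq]
  exact tsum_congr fun z => max_add_min _ _

lemma tsum_le_one_sub_bayesError (ha : ∀ z, 0 ≤ a z) (hb : ∀ z, 0 ≤ b z)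
    (hab : HasSum (fun z => a z + b z) 1) {c : Z → ℝ} (hc₀ : ∀ z, 0 ≤ c z)
    (hc : ∀ z, c z ≤ max (a z) (b z)) : ∑' z, c z ≤ 1 - bayesError a b := by
  have hmax := summable_max_of_hasSum_add ha hb hab
  rw [← tsum_max_eq_one_sub_bayesError ha hb hab]
  exact (hmax.of_nonneg_of_le hc₀ hc).tsum_le_tsum hc hmax

lemma binCondEntropy_le_crossEntropy (ha : ∀ z, 0 ≤ a z) (hb : ∀ z, 0 ≤ b z)
    (hab : HasSum (fun z => a z + b z) 1) {s : ℝ} (hs₀ : 0 < s) (hs₁ : s < 1) :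
    binCondEntropy a b ≤ -(bayesError a b * log s + (1 - bayesError a b) * log (1 - s)) := by
  have hmin := (summable_min_of_hasSum_add ha hb hab).mul_right (log s)
  have hmax := (summable_max_of_hasSum_add ha hb hab).mul_right (log (1 - s))
  rw [← tsum_max_eq_one_sub_bayesError ha hb hab, bayesError, ← tsum_mul_right,
    ← tsum_mul_right, ← hmin.tsum_add hmax, binCondEntropy, ← tsum_neg, ← tsum_neg]
  by_cases hT : Summable fun z => a z * log (a z / (a z + b z)) + b z * log (b z / (a z + b z))
  · exact hT.neg.tsum_le_tsum (fun z => neg_mul_log_add_le_min_max (ha z) (hb z) hs₀ hs₁)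
      (hmin.add hmax).neg
  · -- a divergent series has the junk sum `0`
    rw [tsum_eq_zero_of_not_summable (summable_neg_iff.not.2 hT)]
    refine tsum_nonneg fun z => ?_
    have hlog₀ : log s ≤ 0 := log_nonpos hs₀.le hs₁.le
    have hlog₁ : log (1 - s) ≤ 0 := log_nonpos (by linarith) (by linarith)
    have := (ha z).trans (le_max_left (a z) (b z))
    nlinarith [le_min (ha z) (hb z)]

lemma fanoGap_le_bayesError (ha : ∀ z, 0 ≤ a z) (hb : ∀ z, 0 ≤ b z)
    (hab : HasSum (fun z => a z + b z) 1) {H : ℝ} (hH₀ : 0 < H)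
    (hH : H * log 2 = binCondEntropy a b) : fanoGap H ≤ bayesError a b := by
  have hH₁ : H ≤ 1 := by
    have := binCondEntropy_le_crossEntropy ha hb hab (s := 1 / 2) (by norm_num) (by norm_num)
    rw [show (1 : ℝ) - 1 / 2 = 1 / 2 by norm_num, one_div, log_inv] at this
    nlinarith [log_pos one_lt_two]
  have hp₀ := fanoGap_pos hH₀ (by linarith)
  have hp₁ := fanoGap_lt_half hH₀ hH₁
  exact le_of_binEntropy_le_crossEntropy hp₀ hp₁ ((binEntropy_fanoGap_le hH₀ hH₁).trans
    (hH ▸ binCondEntropy_le_crossEntropy ha hb hab hp₀ (by linarith)))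

end BayesError

section JointMass

variable {Ω Z : Type*} [MeasurableSpace Ω] {μ : Measure Ω} {U : Ω → Bool} {R : Ω → Z}

noncomputable def jointMass (μ : Measure Ω) (U : Ω → Bool) (R : Ω → Z) (u : Bool) (z : Z) : ℝ :=
  μ.real {ω | U ω = u ∧ R ω = z}

lemma jointMass_false_add_true [IsFiniteMeasure μ] (hU : Measurable U) (z : Z) :
    jointMass μ U R false z + jointMass μ U R true z = μ.real {ω | R ω = z} := by
  rw [jointMass, jointMass,
    ← measureReal_inter_add_sdiff (s := {ω | R ω = z}) (hU (measurableSet_singleton false))]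
  congr 2 <;> ext ω <;> simp [and_comm]

lemma condEnt2_mul_log_two [IsFiniteMeasure μ] (hU : Measurable U) :
    condEnt2 μ U R * log 2 = binCondEntropy (jointMass μ U R false) (jointMass μ U R true) := by
  rw [condEnt2, binCondEntropy, neg_mul, ← tsum_mul_right]
  congr 1
  refine tsum_congr fun z => ?_
  simp only [tsum_bool, ← measureReal_def, ← jointMass_false_add_true hU z, jointMass, logb]
  field_simp

variable [MeasurableSpace Z] [Countable Z] [MeasurableSingletonClass Z]

lemma hasSum_measureReal_inter_fiber [IsFiniteMeasure μ] (hR : Measurable R) {S : Set Ω}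
    (hS : MeasurableSet S) : HasSum (fun z => μ.real (S ∩ {ω | R ω = z})) (μ.real S) := by
  have h : ∑' z, μ (S ∩ R ⁻¹' {z}) = μ S := by
    rw [← measure_iUnion (fun i j hij => (pairwise_disjoint_fiber R hij).mono
        Set.inter_subset_right Set.inter_subset_right)
        fun z => hS.inter (hR (measurableSet_singleton z)),
      ← Set.inter_iUnion, ← Set.preimage_iUnion, Set.iUnion_of_singleton, Set.preimage_univ,
      Set.inter_univ]
  have := ENNReal.hasSum_toReal (h ▸ measure_ne_top μ S)
  rwa [← ENNReal.tsum_toReal_eq fun _ => measure_ne_top μ _, h] at this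

lemma hasSum_jointMass [IsProbabilityMeasure μ] (hU : Measurable U) (hR : Measurable R) :
    HasSum (fun z => jointMass μ U R false z + jointMass μ U R true z) 1 := by
  simpa [jointMass_false_add_true hU] using
    hasSum_measureReal_inter_fiber (μ := μ) hR MeasurableSet.univ

lemma measureReal_eq_tsum_jointMass [IsFiniteMeasure μ] (hU : Measurable U) (hR : Measurable R)
    (A : Z → Bool) : μ.real {ω | A (R ω) = U ω} = ∑' z, jointMass μ U R (A z) z := by
  refine ((hasSum_measureReal_inter_fiber hR
    (measurableSet_eq_fun ((measurable_of_countable A).comp hR) hU)).tsum_eq.symm.trans ?_)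
  refine tsum_congr fun z => ?_
  simp only [jointMass]
  congr 1
  ext ω
  grind

end JointMass

/-- **Theorem 3.2 (guaranteed privacy leakage against property inference attacks).**
If `(U, R)` are jointly distributed with the private binary dataset property
`U ∈ {0,1}` and the (aggregated) dataset representation `R` valued in a
countable space `Z`, and `H(U | R) > 0` (in bits), then any property-inference
function `A : Z → {0,1}` satisfies
`Pr(A(R) = U) ≤ 1 − H(U | R) / (2 · log₂(6 / H(U | R)))`. -/
theorem property_inference_accuracy_bound
    {Ω Z : Type*} [MeasurableSpace Ω] [MeasurableSpace Z]
    [Countable Z] [MeasurableSingletonClass Z]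
    (μ : Measure Ω) [IsProbabilityMeasure μ]
    (U : Ω → Bool) (R : Ω → Z)
    (hU : Measurable U) (hR : Measurable R)
    (hH : 0 < condEnt2 μ U R) :
    ∀ A : Z → Bool,
      (μ {ω | A (R ω) = U ω}).toReal ≤
        1 - condEnt2 μ U R / (2 * Real.logb 2 (6 / condEnt2 μ U R)) := by
  intro A
  have ha (z : Z) : 0 ≤ jointMass μ U R false z := measureReal_nonneg
  have hb (z : Z) : 0 ≤ jointMass μ U R true z := measureReal_nonneg
  have hab := hasSum_jointMass (μ := μ) hU hR
  have hgap := fanoGap_le_bayesError ha hb hab hH (condEnt2_mul_log_two hU)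
  calc (μ {ω | A (R ω) = U ω}).toReal = ∑' z, jointMass μ U R (A z) z :=
        measureReal_eq_tsum_jointMass hU hR A
    _ ≤ 1 - bayesError (jointMass μ U R false) (jointMass μ U R true) :=
        tsum_le_one_sub_bayesError ha hb hab (fun _ => measureReal_nonneg)
          fun z => by cases A z <;> simp
    _ ≤ 1 - fanoGap (condEnt2 μ U R) := by linarith
end

section
/- Let Z be a normed vector space and let (x, y, u) be jointly distributed random variables, where y ∈ {0,1} is the task label, u ∈ {0,1} is the private membership bit with Pr(u = 0) > 0 and Pr(u = 1) > 0, and x takes values in a data space. Let f map x to a representation f(x) ∈ Z with ‖f(x)‖ ≤ R almost surely, and let C : Z → {0,1} ⊂ ℝ be a task classifier that is C_L-Lipschitz. Define the membership adversary advantage Adv = sup over measurable A : Z → {0,1} of |Pr(A(f(x)) = 1 | u = 0) − Pr(A(f(x)) = 1 | u = 1)|, and the constant Δ_{y|u} = |Pr(y = 1 | u = 0) − Pr(y = 1 | u = 1)|. Then the utility risk satisfies Pr(y ≠ C(f(x)) | u = 0) + Pr(y ≠ C(f(x)) | u = 1) ≥ Δ_{y|u} − 2·R·C_L·Adv. -/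
/-!
On each side `u = 0, 1` the events `{y = 1}` and `{C (f x) = 1}` differ only inside the error
event `{y ≠ C (f x)}`, so `Δ_{y|u}` is at most the two errors plus the gap between the
conditional probabilities of `{C (f x) = 1}`. Thresholding `C` is itself an attack, so this gap
is at most `Adv`. This already suffices when `2 R C_L ≥ 1`; otherwise a `{0,1}`-valued
`C_L`-Lipschitz `C` cannot change value on the ball of radius `R`, which carries all
representations, and the gap vanishes.
-/

open MeasureTheory ProbabilityTheory
open scoped ENNReal NNReal symmDiff

section Measures

variable {Ω : Type*} [MeasurableSpace Ω]

lemma abs_measureReal_sub_le_of_symmDiff_subset (ν : Measure Ω) [IsFiniteMeasure ν]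
    {E F G : Set Ω} (h : E ∆ F ⊆ G) : |ν.real E - ν.real F| ≤ ν.real G :=
  abs_sub_le_iff.mpr
    ⟨(le_measureReal_sdiff).trans (measureReal_mono (le_sup_left.trans h)),
      (le_measureReal_sdiff).trans (measureReal_mono (le_sup_right.trans h))⟩

lemma abs_measureReal_sub_le_add_add_of_symmDiff_subset (ν₀ ν₁ : Measure Ω)
    [IsFiniteMeasure ν₀] [IsFiniteMeasure ν₁] {E F G : Set Ω} (h : E ∆ F ⊆ G) :
    |ν₀.real E - ν₁.real E| ≤ ν₀.real G + ν₁.real G + |ν₀.real F - ν₁.real F| := by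
  have h₀ := abs_measureReal_sub_le_of_symmDiff_subset ν₀ h
  have h₁ := abs_measureReal_sub_le_of_symmDiff_subset ν₁ h
  have htri₀ := abs_sub_le (ν₀.real E) (ν₀.real F) (ν₁.real E)
  have htri₁ := abs_sub_le (ν₀.real F) (ν₁.real F) (ν₁.real E)
  rw [abs_sub_comm (ν₁.real F)] at htri₁
  linarith

lemma measure_setOf_eq_of_ae_eq_prop {ν₀ ν₁ : Measure Ω} [IsProbabilityMeasure ν₀]
    [IsProbabilityMeasure ν₁] {p : Ω → Prop} {P : Prop} (h₀ : ∀ᵐ ω ∂ν₀, p ω = P)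
    (h₁ : ∀ᵐ ω ∂ν₁, p ω = P) : ν₀ {ω | p ω} = ν₁ {ω | p ω} := by
  rw [measure_congr (s := {ω | p ω}) (t := {_ω | P}) h₀,
    measure_congr (s := {ω | p ω}) (t := {_ω | P}) h₁]
  by_cases hP : P <;> simp [hP]

end Measures

section Advantage

variable {Ω Z : Type*} [MeasurableSpace Ω] [MeasurableSpace Z]

noncomputable def advantage (ν₀ ν₁ : Measure Ω) (g : Ω → Z) : ℝ :=
  ⨆ (A : Z → Bool) (_ : Measurable A),
    |ν₀.real {ω | A (g ω) = true} - ν₁.real {ω | A (g ω) = true}|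

lemma advantage_nonneg (ν₀ ν₁ : Measure Ω) (g : Ω → Z) : 0 ≤ advantage ν₀ ν₁ g :=
  Real.iSup_nonneg fun _ => Real.iSup_nonneg fun _ => abs_nonneg _

lemma abs_measureReal_sub_le_advantage (ν₀ ν₁ : Measure Ω) [IsZeroOrProbabilityMeasure ν₀]
    [IsZeroOrProbabilityMeasure ν₁] (g : Ω → Z) {S : Set Z} (hS : MeasurableSet S) :
    |ν₀.real (g ⁻¹' S) - ν₁.real (g ⁻¹' S)| ≤ advantage ν₀ ν₁ g := by
  classical
  have hbdd : BddAbove (Set.range fun A : Z → Bool => ⨆ (_ : Measurable A),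
      |ν₀.real {ω | A (g ω) = true} - ν₁.real {ω | A (g ω) = true}|) :=
    ⟨1, Set.forall_mem_range.mpr fun _ => Real.iSup_le (fun _ =>
      abs_sub_le_of_nonneg_of_le measureReal_nonneg measureReal_le_one
        measureReal_nonneg measureReal_le_one) zero_le_one⟩
  have hA : Measurable fun z => decide (z ∈ S) := measurable_to_bool (by convert hS; ext; simp)
  refine le_ciSup_of_le hbdd (fun z => decide (z ∈ S)) ?_
  rw [ciSup_pos hA]
  simp [Set.preimage]

end Advantage

lemma LipschitzWith.one_le_mul_dist_of_eq_one_of_ne_one {Z : Type*} [PseudoMetricSpace Z]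
    {K : ℝ≥0} {C : Z → ℝ} (hC : LipschitzWith K C) (hC01 : ∀ z, C z = 0 ∨ C z = 1) {z z' : Z}
    (hz : C z = 1) (hz' : C z' ≠ 1) : 1 ≤ K * dist z z' := by
  have hz'0 : C z' = 0 := (hC01 z').resolve_right hz'
  simpa [Real.dist_eq, hz, hz'0] using hC.dist_le_mul z z'

lemma abs_measureReal_sub_le_mul_advantage {Ω Z : Type*} [MeasurableSpace Ω]
    [NormedAddCommGroup Z] [MeasurableSpace Z] [OpensMeasurableSpace Z]
    (ν₀ ν₁ : Measure Ω) [IsProbabilityMeasure ν₀] [IsProbabilityMeasure ν₁] {g : Ω → Z} {R : ℝ}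
    (hR₀ : ∀ᵐ ω ∂ν₀, ‖g ω‖ ≤ R) (hR₁ : ∀ᵐ ω ∂ν₁, ‖g ω‖ ≤ R)
    {C : Z → ℝ} {K : ℝ≥0} (hC : LipschitzWith K C) (hC01 : ∀ z, C z = 0 ∨ C z = 1) :
    |ν₀.real {ω | C (g ω) = 1} - ν₁.real {ω | C (g ω) = 1}| ≤ 2 * R * K * advantage ν₀ ν₁ g := by
  by_cases hjump : ∃ z z', ‖z‖ ≤ R ∧ ‖z'‖ ≤ R ∧ C z = 1 ∧ C z' ≠ 1
  · obtain ⟨z, z', hz, hz', hCz, hCz'⟩ := hjump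
    have hRK : 1 ≤ 2 * R * K := by
      have := hC.one_le_mul_dist_of_eq_one_of_ne_one hC01 hCz hCz'
      nlinarith [dist_le_norm_add_norm z z', K.coe_nonneg]
    calc |ν₀.real {ω | C (g ω) = 1} - ν₁.real {ω | C (g ω) = 1}|
        ≤ advantage ν₀ ν₁ g :=
          abs_measureReal_sub_le_advantage ν₀ ν₁ g
            (hC.continuous.measurable (measurableSet_singleton 1))
      _ ≤ 2 * R * K * advantage ν₀ ν₁ g := le_mul_of_one_le_left (advantage_nonneg _ _ _) hRK
  · push Not at hjump
    have hball : ∀ ω, ‖g ω‖ ≤ R → (C (g ω) = 1) = ∃ z, ‖z‖ ≤ R ∧ C z = 1 := fun ω hω =>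
      propext ⟨fun h => ⟨g ω, hω, h⟩, fun ⟨z, hz, hCz⟩ => hjump z (g ω) hz hω hCz⟩
    have hgap : ν₀ {ω | C (g ω) = 1} = ν₁ {ω | C (g ω) = 1} :=
      measure_setOf_eq_of_ae_eq_prop (hR₀.mono hball) (hR₁.mono hball)
    obtain ⟨ω, hω⟩ := hR₀.exists
    have hR : 0 ≤ R := (norm_nonneg _).trans hω
    rw [measureReal_def, measureReal_def, hgap, sub_self, abs_zero]
    exact mul_nonneg (by positivity) (advantage_nonneg _ _ _)

theorem utility_privacy_tradeoff_MIA_general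
    {Ω Xsp Z : Type*} [MeasurableSpace Ω]
    [NormedAddCommGroup Z] [MeasurableSpace Z] [BorelSpace Z]
    (μ : Measure Ω) [IsProbabilityMeasure μ]
    (X : Ω → Xsp) (y : Ω → ℝ) (u : Ω → Bool)
    (hu0 : μ {ω | u ω = false} ≠ 0) (hu1 : μ {ω | u ω = true} ≠ 0)
    (f : Xsp → Z)
    (R : ℝ) (hR : ∀ᵐ ω ∂μ, ‖f (X ω)‖ ≤ R)
    (C : Z → ℝ) (CL : ℝ≥0) (hC : LipschitzWith CL C)
    (hC01 : ∀ z, C z = 0 ∨ C z = 1) :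
    (μ[|{ω | u ω = false}] {ω | y ω ≠ C (f (X ω))}).toReal +
      (μ[|{ω | u ω = true}] {ω | y ω ≠ C (f (X ω))}).toReal ≥
    |(μ[|{ω | u ω = false}] {ω | y ω = 1}).toReal -
      (μ[|{ω | u ω = true}] {ω | y ω = 1}).toReal| -
    2 * R * (CL : ℝ) *
      (⨆ (A : Z → Bool) (_ : Measurable A),
        |(μ[|{ω | u ω = false}] {ω | A (f (X ω)) = true}).toReal -
         (μ[|{ω | u ω = true}] {ω | A (f (X ω)) = true}).toReal|) := by
  have := cond_isProbabilityMeasure hu0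
  have := cond_isProbabilityMeasure hu1
  have hsplit := abs_measureReal_sub_le_add_add_of_symmDiff_subset
    (μ[|{ω | u ω = false}]) (μ[|{ω | u ω = true}])
    (E := {ω | y ω = 1}) (F := {ω | C (f (X ω)) = 1}) (G := {ω | y ω ≠ C (f (X ω))})
    (by rintro ω (⟨hyω, hCω⟩ | ⟨hCω, hyω⟩) h <;> simp_all)
  have hgap := abs_measureReal_sub_le_mul_advantage (μ[|{ω | u ω = false}]) (μ[|{ω | u ω = true}])
    (cond_absolutelyContinuous.ae_le hR) (cond_absolutelyContinuous.ae_le hR) hC hC01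
  rw [advantage] at hgap
  simp only [measureReal_def] at hsplit hgap
  linarith

/-- **Theorem B.1 (utility–privacy tradeoff against membership inference attacks).**
For a binary task label `y ∈ {0,1}`, private membership bit `u ∈ {0,1}` (both classes
having positive probability), an encoder `f` whose representations are bounded in norm by
`R`, and a `C_L`-Lipschitz task classifier `C : Z → {0,1} ⊂ ℝ`, the utility risk
`Pr(y ≠ C(f(x)) | u=0) + Pr(y ≠ C(f(x)) | u=1)` is at least
`Δ_{y|u} − 2·R·C_L·Adv`, where
`Adv = sup_{measurable A : Z → {0,1}} |Pr(A(f(x))=1 | u=0) − Pr(A(f(x))=1 | u=1)|`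
and `Δ_{y|u} = |Pr(y=1 | u=0) − Pr(y=1 | u=1)|`. -/
theorem utility_privacy_tradeoff_MIA
    {Ω Xsp Z : Type*} [MeasurableSpace Ω] [MeasurableSpace Xsp]
    [NormedAddCommGroup Z] [NormedSpace ℝ Z] [MeasurableSpace Z] [BorelSpace Z]
    (μ : Measure Ω) [IsProbabilityMeasure μ]
    (X : Ω → Xsp) (y : Ω → ℝ) (u : Ω → Bool)
    (hX : Measurable X) (hy : Measurable y) (hu : Measurable u)
    (hy01 : ∀ ω, y ω = 0 ∨ y ω = 1)
    (hu0 : μ {ω | u ω = false} ≠ 0) (hu1 : μ {ω | u ω = true} ≠ 0)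
    (f : Xsp → Z) (hf : Measurable f)
    (R : ℝ) (hR : ∀ᵐ ω ∂μ, ‖f (X ω)‖ ≤ R)
    (C : Z → ℝ) (CL : ℝ≥0) (hC : LipschitzWith CL C)
    (hC01 : ∀ z, C z = 0 ∨ C z = 1) :
    (μ[|{ω | u ω = false}] {ω | y ω ≠ C (f (X ω))}).toReal +
      (μ[|{ω | u ω = true}] {ω | y ω ≠ C (f (X ω))}).toReal ≥
    |(μ[|{ω | u ω = false}] {ω | y ω = 1}).toReal -
      (μ[|{ω | u ω = true}] {ω | y ω = 1}).toReal| -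
    2 * R * (CL : ℝ) *
      (⨆ (A : Z → Bool) (_ : Measurable A),
        |(μ[|{ω | u ω = false}] {ω | A (f (X ω)) = true}).toReal -
         (μ[|{ω | u ω = true}] {ω | A (f (X ω)) = true}).toReal|) :=
  utility_privacy_tradeoff_MIA_general μ X y u hu0 hu1 f R hR C CL hC hC01
end
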